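/- Let k ≥ 1 and let G be a nontrivial prosoluble profinite group in which every uniform k-step commutator is an FC-element. Then the Fitting subgroup of G is nontrivial; that is, G has a nontrivial pronilpotent closed normal subgroup. -/

import Mathlib

/-- The commutator `[a,b] = a⁻¹ * b⁻¹ * a * b`. -/
def pcomm {G : Type*} [Group G] (a b : G) : G := a⁻¹ * b⁻¹ * a * b

/-- Left-normed commutator `[x₁,…,xₙ]` of a list of group elements
(equal to `1` for the empty list). -/
def lnc {G : Type*} [Group G] : List G → G
  | [] => 1
  | a :: t => t.foldl pcomm a

/-- `p` divides the order of the image of `x` in `G ⧸ N`. -/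
def pDvdOrderInQuot {G : Type*} [Group G] (N : Subgroup G) [N.Normal] (x : G) (p : ℕ) :
    Prop :=
  p ∣ orderOf (QuotientGroup.mk' N x)

/-- `π(x)`: the set of primes dividing the order of the image of `x` in some
quotient of `G` by an open normal subgroup (i.e. in some finite continuous
quotient, when `G` is profinite). -/
def primesOf {G : Type*} [Group G] [TopologicalSpace G] (x : G) : Set ℕ :=
  {p | p.Prime ∧ ∃ (N : Subgroup G) (hN : N.Normal), IsOpen (N : Set G) ∧
    @pDvdOrderInQuot G _ N hN x p}

/-- `g` is a uniform `k`-step commutator: `g = [x₁,…,x_k]` (left-normed) with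
`π(x₁) = ⋯ = π(x_k)`. -/
def IsUniformCommutator {G : Type*} [Group G] [TopologicalSpace G] (k : ℕ) (g : G) : Prop :=
  ∃ x : Fin k → G, (∀ i j, primesOf (x i) = primesOf (x j)) ∧ g = lnc (List.ofFn x)

def nilpQuot {G : Type*} [Group G] (N : Subgroup G) [N.Normal] : Prop :=
  Group.IsNilpotent (G ⧸ N)

/-- A topological group is pronilpotent if all its quotients by open normal
subgroups are nilpotent. -/
def IsPronilpotent (G : Type*) [Group G] [TopologicalSpace G] : Prop :=
  ∀ (N : Subgroup G) (hN : N.Normal), IsOpen (N : Set G) → @nilpQuot G _ N hN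

def solvQuot {G : Type*} [Group G] (N : Subgroup G) [N.Normal] : Prop :=
  IsSolvable (G ⧸ N)

/-- A topological group is prosoluble if all its quotients by open normal
subgroups are soluble. -/
def IsProsoluble (G : Type*) [Group G] [TopologicalSpace G] : Prop :=
  ∀ (N : Subgroup G) (hN : N.Normal), IsOpen (N : Set G) → @solvQuot G _ N hN

/-- An element is an FC-element if its conjugacy class is finite. -/
def IsFCElement {G : Type*} [Group G] (x : G) : Prop :=
  {y : G | ∃ h : G, y = h⁻¹ * x * h}.Finite


/-!
Pick `y ≠ 1`. If every left-normed `k`-fold commutator of conjugates of `y` is trivial, then in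
each finite quotient of the closed normal closure of `y` the images of the conjugates of `y`
generate and all their `k`-fold commutators vanish, so that quotient is nilpotent: the closed
normal closure of `y` is pronilpotent. Otherwise some such commutator `g ≠ 1` is a uniform
commutator (conjugates have the same `π`), hence an FC-element. Its conjugacy class is finite, so
its centralizer `K` is an open normal subgroup centralizing the closed normal closure `M` of `g`.
Either `K ∩ M` is a nontrivial abelian closed normal subgroup, or `M` embeds in the finite soluble
group `G/K`, and then the last nontrivial term of the derived series of `M` is one.
-/

open Subgroup QuotientGroup

section LeftNormedCommutator

variable {G H : Type*} [Group G] [Group H]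

theorem pcomm_eq_one_iff {a b : G} : pcomm a b = 1 ↔ a * b = b * a := by
  rw [pcomm, mul_assoc (a⁻¹ * b⁻¹), ← mul_inv_rev, inv_mul_eq_one, eq_comm]

theorem map_pcomm (f : G →* H) (a b : G) : f (pcomm a b) = pcomm (f a) (f b) := by
  simp [pcomm]

theorem map_lnc (f : G →* H) (l : List G) : f (lnc l) = lnc (l.map f) := by
  cases l with
  | nil => exact map_one f
  | cons a t =>
    rw [List.map_cons, lnc, lnc, List.foldl_map]
    exact (List.foldl_hom f (fun x y => (map_pcomm f x y).symm)).symm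

theorem lnc_ofFn_snoc {n : ℕ} (x : Fin (n + 1) → G) (g : G) :
    lnc (List.ofFn (Fin.snoc x g)) = pcomm (lnc (List.ofFn x)) g := by
  simp only [List.ofFn_succ' (Fin.snoc x g), Fin.snoc_castSucc, Fin.snoc_last,
    List.concat_eq_append, List.ofFn_succ (n := n), List.cons_append, lnc, List.foldl_append,
    List.foldl_cons, List.foldl_nil]

end LeftNormedCommutator

/-- Induction on `n` through `K ⧸ center K`: the `n`-fold commutators of generators commute with
every generator, hence are central. -/
theorem Group.isNilpotent_of_lnc_eq_one {ι : Type*} (n : ℕ) {K : Type*} [Group K] (s : ι → K)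
    (hs : closure (Set.range s) = ⊤) (h : ∀ x : Fin (n + 1) → ι, lnc (List.ofFn (s ∘ x)) = 1) :
    Group.IsNilpotent K := by
  induction n generalizing K with
  | zero =>
    have hs1 : closure (Set.range s) = ⊥ := by
      rw [closure_eq_bot_iff]
      rintro _ ⟨i, rfl⟩
      simpa [lnc] using h fun _ => i
    have : Subsingleton K := subsingleton_iff.mp (subsingleton_of_bot_eq_top (hs1.symm.trans hs))
    infer_instance
  | succ n ih =>
    have hcentral (x : Fin (n + 1) → ι) : lnc (List.ofFn (s ∘ x)) ∈ center K := by
      rw [center_eq_iInf hs]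
      simp only [mem_iInf, Set.forall_mem_range, mem_centralizer_singleton_iff]
      intro i
      have := h (Fin.snoc x i)
      rwa [Fin.comp_snoc, lnc_ofFn_snoc, pcomm_eq_one_iff] at this
    apply of_quotient_center_nilpotent
    refine ih (mk' (center K) ∘ s) ?_ fun x => ?_
    · rw [Set.range_comp, ← MonoidHom.map_closure, hs, map_top_of_surjective _ (mk'_surjective _)]
    · rw [Function.comp_assoc, ← List.map_ofFn, ← map_lnc, mk'_apply, eq_one_iff]
      exact hcentral x

section Algebraic

variable {G : Type*} [Group G]

theorem Subgroup.normalClosure_singleton_eq_closure_range (y : G) :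
    normalClosure {y} = closure (Set.range fun g : G => g⁻¹ * y * g) := by
  rw [normalClosure, Group.conjugatesOfSet]
  congr 1
  ext b
  simp only [Set.mem_iUnion, Set.mem_singleton_iff, exists_prop, exists_eq_left, conjugatesOf,
    Set.mem_ofPred_eq, isConj_iff, Set.mem_range]
  exact ⟨fun ⟨c, hc⟩ => ⟨c⁻¹, by simpa using hc⟩, fun ⟨g, hg⟩ => ⟨g⁻¹, by simpa using hg⟩⟩

theorem Subgroup.normal_centralizer_of_conj_mem {S : Set G}
    (hconj : ∀ s ∈ S, ∀ g : G, g⁻¹ * s * g ∈ S) : (centralizer S).Normal where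
  conj_mem x hx c := mem_centralizer_iff.mpr fun s hs => by
    have hcomm := mem_centralizer_iff.mp hx _ (hconj s hs c)
    calc s * (c * x * c⁻¹) = c * ((c⁻¹ * s * c) * x) * c⁻¹ := by group
      _ = c * x * c⁻¹ * s := by rw [hcomm]; group

/-- The last nontrivial term of the derived series of `M`. -/
theorem Subgroup.exists_normal_isMulCommutative_le (M : Subgroup G) [M.Normal]
    [Group.IsSolvable M] (hM : M ≠ ⊥) : ∃ A ≤ M, A ≠ ⊥ ∧ A.Normal ∧ IsMulCommutative A := by
  classical
  let D (n : ℕ) : Subgroup G := (derivedSeries M n).map M.subtype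
  have hD : ∃ n, D n = ⊥ := by
    obtain ⟨n, hn⟩ := Group.IsSolvable.solvable (G := M)
    exact ⟨n, by simp [D, hn]⟩
  obtain ⟨j, hj⟩ : ∃ j, Nat.find hD = j + 1 := Nat.exists_eq_succ_of_ne_zero fun h0 => hM <| by
    simpa [D, h0, ← MonoidHom.range_eq_map] using Nat.find_spec hD
  have hcomm : ⁅D j, D j⁆ = ⊥ := by
    rw [← map_commutator, ← derivedSeries_succ, ← hj]
    exact Nat.find_spec hD
  refine ⟨D j, map_subtype_le _, Nat.find_min hD (by omega), inferInstance, ?_⟩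
  rw [commutator_eq_bot_iff_le_centralizer] at hcomm
  exact isMulCommutative_iff_of_setLike.mpr fun a ha b hb => hcomm hb a ha

theorem orderOf_inv_mul_mul (a c : G) : orderOf (c⁻¹ * a * c) = orderOf a :=
  SemiconjBy.orderOf_eq c (show c * (c⁻¹ * a * c) = a * c by group)

end Algebraic

section Topological

variable {G : Type*} [Group G] [TopologicalSpace G]

theorem primesOf_inv_mul_mul (a c : G) : primesOf (c⁻¹ * a * c) = primesOf a := by
  simp only [primesOf, pDvdOrderInQuot, map_mul, map_inv, orderOf_inv_mul_mul]

theorem isUniformCommutator_lnc_conj {k : ℕ} (y : G) (x : Fin k → G) :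
    IsUniformCommutator k (lnc (List.ofFn fun i => (x i)⁻¹ * y * x i)) :=
  ⟨_, fun i j => by simp only [primesOf_inv_mul_mul], rfl⟩

theorem isPronilpotent_of_isMulCommutative [IsMulCommutative G] : IsPronilpotent G :=
  fun N _ _ => ⟨1, upperCentralSeries_one_eq_top_iff.mpr <|
    (mk'_surjective N).mul_comm (f := (mk' N).toMulHom) ‹_›⟩

variable [IsTopologicalGroup G]

theorem Subgroup.map_mk'_eq_top_of_dense {D N : Subgroup G} [N.Normal] (hD : Dense (D : Set G))
    (hN : IsOpen (N : Set G)) : D.map (mk' N) = ⊤ := by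
  have hRtop : (D.map (mk' N)).comap (mk' N) = ⊤ := by
    have hNR : N ≤ (D.map (mk' N)).comap (mk' N) := by
      rw [comap_map_eq, ker_mk']
      exact le_sup_right
    have hR := isClosed_of_isOpen _ (isOpen_mono hNR hN)
    rw [← coe_eq_univ, ← hR.closure_eq]
    exact (hD.mono (le_comap_map (mk' N) D)).closure_eq
  rw [← map_comap_eq_self_of_surjective (mk'_surjective N) (D.map _), hRtop,
    map_top_of_surjective _ (mk'_surjective N)]

theorem topologicalClosure_normalClosure_ne_bot {y : G} (hy : y ≠ 1) :
    (normalClosure {y}).topologicalClosure ≠ ⊥ := fun h =>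
  hy (mem_bot.mp (h ▸ le_topologicalClosure _ (subset_normalClosure rfl)))

theorem isPronilpotent_topologicalClosure_normalClosure {y : G} {n : ℕ}
    (h : ∀ x : Fin (n + 1) → G, lnc (List.ofFn fun i => (x i)⁻¹ * y * x i) = 1) :
    IsPronilpotent (normalClosure {y}).topologicalClosure := by
  set F := (normalClosure {y}).topologicalClosure
  let s (g : G) : F := ⟨g⁻¹ * y * g, le_topologicalClosure _ <| by
    rw [normalClosure_singleton_eq_closure_range]; exact subset_closure ⟨g, rfl⟩⟩
  have hdense : Dense (Subgroup.closure (Set.range s) : Set F) := by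
    have himage : Subtype.val '' (Subgroup.closure (Set.range s) : Set F) = normalClosure {y} := by
      rw [← F.coe_subtype, ← coe_map, MonoidHom.map_closure, ← Set.range_comp,
        normalClosure_singleton_eq_closure_range]
      rfl
    exact Subtype.dense_iff.mpr (himage ▸ subset_rfl)
  intro N _ hN
  refine Group.isNilpotent_of_lnc_eq_one n (mk' N ∘ s) ?_ fun x => ?_
  · rw [Set.range_comp, ← MonoidHom.map_closure, map_mk'_eq_top_of_dense hdense hN]
  · have hx : lnc (List.ofFn (s ∘ x)) = 1 := Subtype.val_injective <| by
      rw [← F.coe_subtype, map_lnc, List.map_ofFn]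
      exact h x
    rw [Function.comp_assoc, ← List.map_ofFn, ← map_lnc, hx, map_one]

/-- Each `{g | g⁻¹ * s * g = s}` is a fibre of the continuous map `g ↦ g⁻¹ * s * g` into the
finite, hence discrete, set `S`. -/
theorem Subgroup.isOpen_centralizer_of_finite [T1Space G] {S : Set G} (hS : S.Finite)
    (hconj : ∀ s ∈ S, ∀ g : G, g⁻¹ * s * g ∈ S) : IsOpen (centralizer S : Set G) := by
  have : Finite S := hS
  have hfiber (s : G) (hs : s ∈ S) : IsOpen {g : G | g⁻¹ * s * g = s} := by
    let c (g : G) : S := ⟨g⁻¹ * s * g, hconj s hs g⟩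
    have hc : Continuous c := by fun_prop
    convert (isOpen_discrete {(⟨s, hs⟩ : S)}).preimage hc
    ext g
    simp [c, Subtype.ext_iff]
  convert hS.isOpen_biInter hfiber
  ext g
  simp only [SetLike.mem_coe, mem_centralizer_iff, Set.mem_iInter, Set.mem_ofPred_eq]
  refine forall₂_congr fun s _ => ?_
  rw [mul_assoc, inv_mul_eq_iff_eq_mul]

theorem exists_closed_normal_isMulCommutative_of_isFCElement [CompactSpace G] [T2Space G]
    (hprosol : IsProsoluble G) {g : G} (hg1 : g ≠ 1) (hg : IsFCElement g) :
    ∃ A : Subgroup G, A ≠ ⊥ ∧ A.Normal ∧ IsClosed (A : Set G) ∧ IsMulCommutative A := by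
  set S := {y : G | ∃ h : G, y = h⁻¹ * g * h}
  have hconj : ∀ s ∈ S, ∀ c : G, c⁻¹ * s * c ∈ S := by
    rintro _ ⟨h, rfl⟩ c
    exact ⟨h * c, by group⟩
  set K := centralizer S
  have hKopen : IsOpen (K : Set G) := isOpen_centralizer_of_finite hg hconj
  have : K.Normal := normal_centralizer_of_conj_mem hconj
  set M := (normalClosure {g}).topologicalClosure
  have : M.Normal := (normalClosure {g}).is_normal_topologicalClosure
  have hMK : M ≤ centralizer K := by
    have hgK : g ∈ centralizer K := Set.subset_centralizer_centralizer ⟨1, by group⟩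
    exact topologicalClosure_minimal _ (normalClosure_le_normal (Set.singleton_subset_iff.mpr hgK))
      (Set.isClosed_centralizer _)
  by_cases hKM : K ⊓ M = ⊥
  · have hinj : Function.Injective ((mk' K).comp M.subtype) := by
      rw [injective_iff_map_eq_one]
      intro a ha
      have : (a : G) ∈ K ⊓ M := ⟨(eq_one_iff _).mp ha, a.2⟩
      rw [hKM, mem_bot] at this
      exact Subtype.ext this
    have : Finite (G ⧸ K) := quotient_finite_of_isOpen K hKopen
    have : Finite M := Finite.of_injective _ hinj
    have : Group.IsSolvable (G ⧸ K) := hprosol K ‹_› hKopen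
    have : Group.IsSolvable M := Group.isSolvable_of_isSolvable_injective hinj
    obtain ⟨A, hAM, hA, hAn, hAcomm⟩ :=
      M.exists_normal_isMulCommutative_le (topologicalClosure_normalClosure_ne_bot hg1)
    exact ⟨A, hA, hAn, ((Set.toFinite (M : Set G)).subset hAM).isClosed, hAcomm⟩
  · refine ⟨K ⊓ M, hKM, inferInstance, (K.isClosed_of_isOpen hKopen).inter
      (normalClosure {g}).isClosed_topologicalClosure, ?_⟩
    exact isMulCommutative_iff_of_setLike.mpr fun a ha b hb => hMK hb.2 a ha.1

end Topological

theorem stmt16_general {G : Type*} [Group G] [TopologicalSpace G] [IsTopologicalGroup G]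
    [CompactSpace G] [T2Space G]
    (hnontriv : Nontrivial G) (hprosol : IsProsoluble G)
    (k : ℕ) (hk : 1 ≤ k)
    (hFC : ∀ g : G, IsUniformCommutator k g → IsFCElement g) :
    ∃ F : Subgroup G, F ≠ ⊥ ∧ F.Normal ∧ IsClosed (F : Set G) ∧ IsPronilpotent ↥F := by
  obtain ⟨y, hy⟩ := @exists_ne G hnontriv 1
  obtain ⟨n, rfl⟩ := Nat.exists_eq_add_of_le' hk
  by_cases hlnc : ∀ x : Fin (n + 1) → G, lnc (List.ofFn fun i => (x i)⁻¹ * y * x i) = 1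
  · exact ⟨_, topologicalClosure_normalClosure_ne_bot hy, is_normal_topologicalClosure _,
      isClosed_topologicalClosure _, isPronilpotent_topologicalClosure_normalClosure hlnc⟩
  · obtain ⟨x, hx⟩ := not_forall.mp hlnc
    obtain ⟨A, hA, hAn, hAc, hAcomm⟩ := exists_closed_normal_isMulCommutative_of_isFCElement
      hprosol hx (hFC _ (isUniformCommutator_lnc_conj y x))
    exact ⟨A, hA, hAn, hAc, isPronilpotent_of_isMulCommutative⟩

theorem stmt16 {G : Type*} [Group G] [TopologicalSpace G] [IsTopologicalGroup G]
    [CompactSpace G] [T2Space G] [TotallyDisconnectedSpace G]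
    (hnontriv : Nontrivial G) (hprosol : IsProsoluble G)
    (k : ℕ) (hk : 1 ≤ k)
    (hFC : ∀ g : G, IsUniformCommutator k g → IsFCElement g) :
    ∃ F : Subgroup G, F ≠ ⊥ ∧ F.Normal ∧ IsClosed (F : Set G) ∧ IsPronilpotent ↥F :=
  stmt16_general hnontriv hprosol k hk hFC
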